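/- arXiv:2103.02304 — 6 statements merged into one kernel-verified Lean document; each statement's English description precedes it below -/
import Mathlib

section
/- If a group H with finite symmetric generating set S has purely exponential growth, i.e. there exist C > 0 and ω > 0 with (1/C)·exp(nω) ≤ #(S^{≤n}) ≤ C·exp(nω) for all n ≥ 1, then setting T_n := S^{≤n} (which is also a finite symmetric generating set), the ratio ω(H, T_n)/log(#T_n) tends to 1 as n → ∞. -/
open Filter Topology

def wordBall {H : Type*} [Group H] (S : Set H) (n : ℕ) : Set H :=
  {h | ∃ l : List H, l.length ≤ n ∧ (∀ x ∈ l, x ∈ S) ∧ l.prod = h}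

/-!
Since `T_n^{≤m} = S^{≤nm}`, purely exponential growth pins `log #(S^{≤k})` to within a
constant of `kω`. Dividing by `m` gives `ω(H, T_n) = nω`, and dividing by `n` gives
`log #T_n / n → ω`, so the ratio tends to `ω / ω = 1`.
-/

section WordBall

variable {H : Type*} [Group H] (S : Set H)

lemma wordBall_mono {n m : ℕ} (h : n ≤ m) : wordBall S n ⊆ wordBall S m := by
  rintro x ⟨l, hlen, hmem, rfl⟩
  exact ⟨l, hlen.trans h, hmem, rfl⟩

lemma prod_mem_wordBall_mul_length (n : ℕ) (l : List H) (hl : ∀ x ∈ l, x ∈ wordBall S n) :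
    l.prod ∈ wordBall S (n * l.length) := by
  induction l with
  | nil => exact ⟨[], by simp, by simp, by simp⟩
  | cons a t ih =>
    obtain ⟨la, hla, hamem, haprod⟩ := hl a List.mem_cons_self
    obtain ⟨lt, hlt, htmem, htprod⟩ := ih fun x hx => hl x (List.mem_cons_of_mem a hx)
    refine ⟨la ++ lt, ?_, ?_, by rw [List.prod_append, haprod, htprod, List.prod_cons]⟩
    · rw [List.length_append, List.length_cons, Nat.mul_succ]
      omega
    · intro x hx
      exact (List.mem_append.mp hx).elim (hamem x) (htmem x)

lemma wordBall_wordBall (n m : ℕ) : wordBall (wordBall S n) m = wordBall S (n * m) := by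
  ext h
  constructor
  · rintro ⟨l, hlen, hmem, rfl⟩
    exact wordBall_mono S (Nat.mul_le_mul_left n hlen) (prod_mem_wordBall_mul_length S n l hmem)
  · rintro ⟨l, hlen, hmem, rfl⟩
    induction m generalizing l with
    | zero =>
      obtain rfl : l = [] := List.length_eq_zero_iff.mp (by simpa using hlen)
      exact ⟨[], by simp, by simp, by simp⟩
    | succ m ih =>
      obtain ⟨L, hL, hLmem, hLprod⟩ :=
        ih (l.drop n) (by rw [List.length_drop, Nat.mul_succ] at *; omega)
          fun x hx => hmem x (List.mem_of_mem_drop hx)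
      refine ⟨(l.take n).prod :: L, by simpa using hL, ?_, ?_⟩
      · intro x hx
        rcases List.mem_cons.mp hx with rfl | hx
        · exact ⟨l.take n, List.length_take_le n l,
            fun y hy => hmem y (List.mem_of_mem_take hy), rfl⟩
        · exact hLmem x hx
      · rw [List.prod_cons, hLprod, ← List.prod_append, List.take_append_drop]

end WordBall

lemma abs_log_sub_le_log_of_le_of_le {C a x : ℝ} (hC : 0 < C)
    (hlow : 1 / C * Real.exp x ≤ a) (hhigh : a ≤ C * Real.exp x) :
    |Real.log a - x| ≤ Real.log C := by
  have ha : 0 < a := lt_of_lt_of_le (by positivity) hlow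
  have hlog_low := Real.log_le_log (by positivity) hlow
  have hlog_high := Real.log_le_log ha hhigh
  rw [Real.log_mul (by positivity) (Real.exp_ne_zero _), Real.log_exp, one_div,
    Real.log_inv] at hlog_low
  rw [Real.log_mul hC.ne' (Real.exp_ne_zero _), Real.log_exp] at hlog_high
  exact abs_sub_le_iff.mpr ⟨by linarith, by linarith⟩

lemma tendsto_div_natCast_of_abs_sub_mul_le {f : ℕ → ℝ} {w c : ℝ}
    (hf : ∀ k : ℕ, 1 ≤ k → |f k - k * w| ≤ c) :
    Tendsto (fun k : ℕ => f k / k) atTop (𝓝 w) := by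
  rw [tendsto_iff_norm_sub_tendsto_zero]
  refine squeeze_zero' (Eventually.of_forall fun _ => norm_nonneg _) ?_
    ((tendsto_const_nhds (x := c)).div_atTop tendsto_natCast_atTop_atTop)
  filter_upwards [eventually_ge_atTop 1] with k hk
  have hk0 : (0 : ℝ) < k := by exact_mod_cast hk
  calc ‖f k / k - w‖ = |f k - k * w| / k := by
        rw [Real.norm_eq_abs, ← abs_of_pos hk0, ← abs_div, abs_of_pos hk0]
        congr 1
        field_simp
    _ ≤ c / k := by gcongr; exact hf k hk

theorem stmt2_general {H : Type*} [Group H] (S : Set H)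
    (hpure : ∃ C > (0 : ℝ), ∃ w > (0 : ℝ), ∀ n : ℕ, 1 ≤ n →
      (1 / C) * Real.exp (n * w) ≤ (Nat.card (wordBall S n) : ℝ) ∧
      (Nat.card (wordBall S n) : ℝ) ≤ C * Real.exp (n * w))
    (W : ℕ → ℝ)
    (hW : ∀ n : ℕ, 1 ≤ n →
      Tendsto (fun m : ℕ => Real.log (Nat.card (wordBall (wordBall S n) m)) / m)
        atTop (𝓝 (W n))) :
    Tendsto (fun n : ℕ => W n / Real.log (Nat.card (wordBall S n))) atTop (𝓝 1) := by
  obtain ⟨C, hC, w, hw, hbound⟩ := hpure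
  have hf : ∀ k : ℕ, 1 ≤ k → |Real.log (Nat.card (wordBall S k)) - k * w| ≤ Real.log C :=
    fun k hk => abs_log_sub_le_log_of_le_of_le hC (hbound k hk).1 (hbound k hk).2
  have hW_eq : ∀ n : ℕ, 1 ≤ n → W n = n * w := by
    intro n hn
    refine tendsto_nhds_unique (hW n hn) ?_
    simp only [wordBall_wordBall]
    refine tendsto_div_natCast_of_abs_sub_mul_le (c := Real.log C) fun m hm => ?_
    rw [show (m : ℝ) * (n * w) = ((n * m : ℕ) : ℝ) * w by push_cast; ring]
    exact hf (n * m) (Nat.one_le_iff_ne_zero.mpr (by positivity))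
  have hratio := (tendsto_const_nhds (x := w)).div (tendsto_div_natCast_of_abs_sub_mul_le hf) hw.ne'
  rw [div_self hw.ne'] at hratio
  refine hratio.congr' ?_
  filter_upwards [eventually_ge_atTop 1] with n hn
  rw [Pi.div_apply, hW_eq n hn, div_div_eq_mul_div, mul_comm]

theorem stmt2 {H : Type*} [Group H] (S : Set H) (hfin : S.Finite)
    (hsymm : ∀ s ∈ S, s⁻¹ ∈ S) (hgen : Subgroup.closure S = ⊤)
    (hpure : ∃ C > (0 : ℝ), ∃ w > (0 : ℝ), ∀ n : ℕ, 1 ≤ n →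
      (1 / C) * Real.exp (n * w) ≤ (Nat.card (wordBall S n) : ℝ) ∧
      (Nat.card (wordBall S n) : ℝ) ≤ C * Real.exp (n * w))
    (W : ℕ → ℝ)
    (hW : ∀ n : ℕ, 1 ≤ n →
      Tendsto (fun m : ℕ => Real.log (Nat.card (wordBall (wordBall S n) m)) / m)
        atTop (𝓝 (W n))) :
    Tendsto (fun n : ℕ => W n / Real.log (Nat.card (wordBall S n))) atTop (𝓝 1) :=
  stmt2_general S hpure W hW
end

section
/- Let g be an isometry of a δ-hyperbolic geodesic metric space X. If there is a point o ∈ X with d(o, go) ≥ 2⟨o, g²o⟩_{go} + 6δ, then for all n ≥ 1, d(o, gⁿo) ≥ n·(d(o,go) − 2⟨o,g²o⟩_{go} − 2δ); in particular g has positive asymptotic translation length and is loxodromic. -/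
open Filter Topology

noncomputable def gp {X : Type*} [MetricSpace X] (o x y : X) : ℝ :=
  (dist x o + dist y o - dist x y) / 2

def IsGeodesic {X : Type*} [MetricSpace X] (f : ℝ → X) (x y : X) : Prop :=
  f 0 = x ∧ f (dist x y) = y ∧
    ∀ s ∈ Set.Icc (0 : ℝ) (dist x y), ∀ t ∈ Set.Icc (0 : ℝ) (dist x y),
      dist (f s) (f t) = |s - t|

theorem stmt7 {X : Type*} [MetricSpace X] (δ : ℝ) (hδ : 0 < δ)
    (hgeo : ∀ x y : X, ∃ f : ℝ → X, IsGeodesic f x y)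
    (hhyp : ∀ o x y z : X, min (gp o x z) (gp o z y) - δ ≤ gp o x y)
    (g : X ≃ᵢ X) (o : X)
    (h : dist o (g o) ≥ 2 * gp (g o) o ((g ^ 2) o) + 6 * δ) :
    (∀ n : ℕ, 1 ≤ n →
      dist o ((g ^ n) o) ≥ n * (dist o (g o) - 2 * gp (g o) o ((g ^ 2) o) - 2 * δ)) ∧
    ∃ τ > (0 : ℝ), Tendsto (fun n : ℕ => dist o ((g ^ n) o) / n) atTop (𝓝 τ) := by
  set a : ℝ := dist o (g o) with ha
  set c : ℝ := gp (g o) o ((g ^ 2) o) with hc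
  -- gp is nonnegative
  have gp_nonneg : ∀ w x y : X, 0 ≤ gp w x y := by
    intro w x y
    have := dist_triangle x w y
    unfold gp
    rw [dist_comm y w] at *
    linarith
  have c0 : 0 ≤ c := gp_nonneg _ _ _
  -- isometry facts
  have powd : ∀ (k : ℕ) (x y : X), dist ((g ^ k) x) ((g ^ k) y) = dist x y := by
    intro k x y; exact (g ^ k).dist_eq x y
  set D : ℕ → ℝ := fun n => dist o ((g ^ n) o) with hD
  have xsucc : ∀ n : ℕ, (g ^ (n + 1)) o = (g ^ n) (g o) := by
    intro n; rw [pow_succ]; rfl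
  have xsucc' : ∀ n : ℕ, (g ^ (n + 2)) o = (g ^ n) ((g ^ 2) o) := by
    intro n
    have : g ^ (n + 2) = g ^ n * g ^ 2 := by rw [pow_add]
    rw [this]; rfl
  have hda : ∀ n : ℕ, dist ((g ^ n) o) ((g ^ (n + 1)) o) = a := by
    intro n; rw [xsucc n]; exact powd n o (g o)
  -- the inner Gromov product at x_{n+1} between x_n and x_{n+2} equals c
  have hgpc : ∀ n : ℕ, gp ((g ^ (n + 1)) o) ((g ^ n) o) ((g ^ (n + 2)) o) = c := by
    intro n
    rw [hc]
    unfold gp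
    rw [xsucc n, xsucc' n]
    rw [powd n o (g o), powd n ((g ^ 2) o) (g o), powd n o ((g ^ 2) o)]
  -- the expansion of gp at x_n between o and x_{n+1}
  have hexp : ∀ n : ℕ, D (n + 1) = D n + a - 2 * gp ((g ^ n) o) o ((g ^ (n + 1)) o) := by
    intro n
    unfold gp
    have h1 : dist o ((g ^ n) o) = D n := rfl
    have h2 : dist ((g ^ (n + 1)) o) ((g ^ n) o) = a := by
      rw [dist_comm]; exact hda n
    have h3 : dist o ((g ^ (n + 1)) o) = D (n + 1) := rfl
    rw [h1, h2, h3]; ring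
  -- key induction
  have key : ∀ n : ℕ, D (n + 1) ≥ D n + (a - 2 * c - 2 * δ) ∧
      gp ((g ^ (n + 1)) o) o ((g ^ (n + 2)) o) ≤ c + δ := by
    intro n
    induction n with
    | zero =>
      have hD0 : D 0 = 0 := by simp [hD]
      have hD1 : D 1 = a := by
        have := hda 0; simpa [hD] using this.symm
      constructor
      · rw [hD0, hD1]; linarith
      · have hD0 : dist o ((g ^ 0) o) = 0 := by simp
        have hA : gp ((g ^ (0 + 1)) o) o ((g ^ 0) o) = a := by
          unfold gp
          have e2 : dist ((g ^ 0) o) ((g ^ (0 + 1)) o) = a := hda 0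
          have e3 : dist o ((g ^ (0 + 1)) o) = a := by
            have := hda 0; rw [← this]; simp
          rw [e3, e2, hD0]; ring
        have hB := hgpc 0
        have htri := hhyp ((g ^ (0 + 1)) o) ((g ^ 0) o) ((g ^ (0 + 2)) o) o
        rw [hB] at htri
        have hsymm : gp ((g ^ (0 + 1)) o) ((g ^ 0) o) o
            = gp ((g ^ (0 + 1)) o) o ((g ^ 0) o) := by
          unfold gp; rw [dist_comm ((g ^ 0) o) o]; ring
        rw [hsymm, hA] at htri
        set C := gp ((g ^ (0 + 1)) o) o ((g ^ (0 + 2)) o)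
        rcases min_cases a C with ⟨heq, h2⟩ | ⟨heq, h2⟩ <;> rw [heq] at htri <;> linarith
    | succ n ih =>
      obtain ⟨ih1, ih2⟩ := ih
      have hstep : D (n + 2) = D (n + 1) + a - 2 * gp ((g ^ (n + 1)) o) o ((g ^ (n + 2)) o) :=
        hexp (n + 1)
      have h1 : D (n + 2) ≥ D (n + 1) + (a - 2 * c - 2 * δ) := by
        rw [hstep]; linarith
      refine ⟨h1, ?_⟩
      -- now show gp_{x_{n+2}}(o, x_{n+3}) ≤ c + δ
      -- A := gp_{x_{n+2}}(o, x_{n+1}) = (D(n+2) + a - D(n+1))/2 ≥ a - c - δ ≥ c + 5δ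
      have hA : gp ((g ^ (n + 2)) o) o ((g ^ (n + 1)) o)
          = (D (n + 2) + a - D (n + 1)) / 2 := by
        unfold gp
        have e1 : dist o ((g ^ (n + 2)) o) = D (n + 2) := rfl
        have e2 : dist ((g ^ (n + 1)) o) ((g ^ (n + 2)) o) = a := hda (n + 1)
        have e3 : dist o ((g ^ (n + 1)) o) = D (n + 1) := rfl
        rw [e1, e2, e3]
      have hAbig : gp ((g ^ (n + 2)) o) o ((g ^ (n + 1)) o) ≥ c + 2 * δ := by
        rw [hA, hstep]
        have : gp ((g ^ (n + 1)) o) o ((g ^ (n + 2)) o) ≤ c + δ := ih2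
        have ha' : a ≥ 2 * c + 6 * δ := h
        linarith
      -- hyperbolicity at w = x_{n+2}: gp w x_{n+1} x_{n+3} ≥ min (gp w x_{n+1} o) (gp w o x_{n+3}) - δ
      have hB := hgpc (n + 1)
      have htri := hhyp ((g ^ (n + 2)) o) ((g ^ (n + 1)) o) ((g ^ (n + 3)) o) o
      rw [show n + 1 + 1 = n + 2 from rfl, show n + 1 + 2 = n + 3 from rfl] at hB
      rw [hB] at htri
      have hsymm : gp ((g ^ (n + 2)) o) ((g ^ (n + 1)) o) o
          = gp ((g ^ (n + 2)) o) o ((g ^ (n + 1)) o) := by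
        unfold gp; rw [dist_comm ((g ^ (n + 1)) o) o]; ring
      rw [hsymm] at htri
      set A := gp ((g ^ (n + 2)) o) o ((g ^ (n + 1)) o)
      set C := gp ((g ^ (n + 2)) o) o ((g ^ (n + 3)) o)
      rcases min_cases A C with ⟨heq, h2⟩ | ⟨heq, h2⟩ <;> rw [heq] at htri <;> linarith
  -- summation
  have sum : ∀ n : ℕ, D n ≥ n * (a - 2 * c - 2 * δ) := by
    intro n
    induction n with
    | zero => simp [hD]
    | succ n ih =>
      have := (key n).1
      push_cast
      push_cast at ih
      linarith
  refine ⟨fun n _ => sum n, ?_⟩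
  -- subadditivity
  have hsub : Subadditive D := by
    intro m n
    have : (g ^ (m + n)) o = (g ^ m) ((g ^ n) o) := by
      rw [pow_add]; rfl
    calc D (m + n) = dist o ((g ^ m) ((g ^ n) o)) := by rw [hD]; simp [this]
      _ ≤ dist o ((g ^ m) o) + dist ((g ^ m) o) ((g ^ m) ((g ^ n) o)) := dist_triangle _ _ _
      _ = D m + D n := by rw [powd m o ((g ^ n) o)]
  have hDnn : ∀ n, 0 ≤ D n := fun n => dist_nonneg
  have hbdd : BddBelow (Set.range fun n : ℕ => D n / n) := by
    refine ⟨0, ?_⟩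
    rintro x ⟨n, rfl⟩
    positivity
  refine ⟨hsub.lim, ?_, hsub.tendsto_lim hbdd⟩
  have hlb : a - 2 * c - 2 * δ ≤ hsub.lim := by
    rw [Subadditive.lim]
    apply le_csInf
    · exact ⟨D 1 / 1, ⟨1, Set.self_mem_Ici, by norm_num⟩⟩
    · rintro x ⟨n, hn, rfl⟩
      have hn1 : (1 : ℕ) ≤ n := hn
      have hnpos : (0 : ℝ) < n := by exact_mod_cast hn1
      show a - 2 * c - 2 * δ ≤ D n / n
      rw [le_div_iff₀ hnpos]
      have hmc : (a - 2 * c - 2 * δ) * n = n * (a - 2 * c - 2 * δ) := mul_comm _ _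
      linarith [sum n]
  linarith
end

section
/- Let g, h be isometries of a δ-hyperbolic geodesic space X and o ∈ X a point with (1/4)·min{d(go,o), d(ho,o)} ≥ max{⟨go, h^{−1}o⟩_o, ⟨g^{−1}o, ho⟩_o} + δ. Then for all n ≥ 1, d(o, (gh)ⁿo) ≥ (n/2)·(d(o,go) + d(o,ho)); in particular gh is loxodromic with asymptotic translation length τ(gh) ≥ (d(o,go)+d(o,ho))/2 > 0. -/
open Filter Topology

section aux

variable {X : Type*} [MetricSpace X]

lemma gp_nonneg (o x y : X) : 0 ≤ gp o x y := by
  have := dist_triangle x o y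
  have := dist_comm o y
  unfold gp
  linarith

lemma gp_comm (o x y : X) : gp o x y = gp o y x := by
  unfold gp
  rw [dist_comm x y]
  ring

lemma gp_isom (φ : X ≃ᵢ X) (o x y : X) : gp (φ o) (φ x) (φ y) = gp o x y := by
  unfold gp
  rw [φ.dist_eq, φ.dist_eq, φ.dist_eq]

lemma gp_add (u v a : X) : gp u a v + gp v a u = dist u v := by
  unfold gp
  rw [dist_comm v u]
  ring

lemma dist_gp (p a b : X) : dist a b = dist a p + dist b p - 2 * gp p a b := by
  unfold gp; ring

/-- The key chain lemma: along a chain with small consecutive Gromov products and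
long steps, the Gromov product of the endpoints at intermediate points stays small. -/
lemma chain_gp (δ c m : ℝ) (hδ : 0 < δ) (hc : 0 ≤ c) (hm : 4 * (c + δ) ≤ m)
    (hhyp : ∀ o x y z : X, min (gp o x z) (gp o z y) - δ ≤ gp o x y)
    (x : ℕ → X) (hstep : ∀ i, m ≤ dist (x i) (x (i + 1)))
    (hprod : ∀ i, gp (x (i + 1)) (x i) (x (i + 2)) ≤ c) :
    ∀ k, gp (x k) (x 0) (x (k + 1)) ≤ c + δ := by
  intro k
  induction k with
  | zero =>
    have : gp (x 0) (x 0) (x 1) = 0 := by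
      unfold gp
      rw [dist_self, dist_comm (x 1) (x 0)]
      ring
    linarith
  | succ k ih =>
    have hlk := hstep k
    have hlk1 := hstep (k + 1)
    have hpk : gp (x (k + 1)) (x k) (x (k + 2)) ≤ c := hprod k
    -- step 1 : gp (x k) (x 0) (x (k+2)) ≤ c + 2δ
    have e1 : gp (x k) (x (k + 2)) (x (k + 1)) + gp (x (k + 1)) (x (k + 2)) (x k) =
        dist (x k) (x (k + 1)) := gp_add _ _ _
    have e1' : gp (x (k + 1)) (x (k + 2)) (x k) = gp (x (k + 1)) (x k) (x (k + 2)) :=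
      gp_comm _ _ _
    have h1 := hhyp (x k) (x 0) (x (k + 1)) (x (k + 2))
    have s1 : gp (x k) (x 0) (x (k + 2)) ≤ c + 2 * δ := by
      by_contra hcon
      push_neg at hcon
      have h2 : c + 2 * δ < gp (x k) (x (k + 2)) (x (k + 1)) := by linarith
      have := lt_min hcon h2
      linarith
    -- step 2 : gp (x (k+2)) (x 0) (x k) ≥ ℓ_{k+1} - c
    have e2 : dist (x k) (x (k + 2)) =
        dist (x k) (x (k + 1)) + dist (x (k + 2)) (x (k + 1)) -
          2 * gp (x (k + 1)) (x k) (x (k + 2)) := dist_gp _ _ _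
    have e3 : gp (x (k + 2)) (x 0) (x k) + gp (x k) (x 0) (x (k + 2)) =
        dist (x (k + 2)) (x k) := gp_add _ _ _
    have hdc : dist (x (k + 2)) (x k) = dist (x k) (x (k + 2)) := dist_comm _ _
    have hdc1 : dist (x (k + 2)) (x (k + 1)) = dist (x (k + 1)) (x (k + 2)) := dist_comm _ _
    have s2 : dist (x (k + 1)) (x (k + 2)) - c ≤ gp (x (k + 2)) (x 0) (x k) := by linarith
    -- step 3 : gp (x (k+2)) (x k) (x (k+1)) ≥ ℓ_{k+1} - c
    have e4 : gp (x (k + 2)) (x k) (x (k + 1)) + gp (x (k + 1)) (x k) (x (k + 2)) =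
        dist (x (k + 2)) (x (k + 1)) := gp_add _ _ _
    have s3 : dist (x (k + 1)) (x (k + 2)) - c ≤ gp (x (k + 2)) (x k) (x (k + 1)) := by linarith
    -- combine
    have h3 := hhyp (x (k + 2)) (x 0) (x (k + 1)) (x k)
    have hmin : dist (x (k + 1)) (x (k + 2)) - c ≤
        min (gp (x (k + 2)) (x 0) (x k)) (gp (x (k + 2)) (x k) (x (k + 1))) :=
      le_min s2 s3
    have s4 : dist (x (k + 1)) (x (k + 2)) - c - δ ≤ gp (x (k + 2)) (x 0) (x (k + 1)) := by
      linarith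
    have e5 : gp (x (k + 1)) (x 0) (x (k + 2)) + gp (x (k + 2)) (x 0) (x (k + 1)) =
        dist (x (k + 1)) (x (k + 2)) := gp_add _ _ _
    linarith

lemma chain_dist (δ c m : ℝ) (hδ : 0 < δ) (hc : 0 ≤ c) (hm : 4 * (c + δ) ≤ m)
    (hhyp : ∀ o x y z : X, min (gp o x z) (gp o z y) - δ ≤ gp o x y)
    (x : ℕ → X) (hstep : ∀ i, m ≤ dist (x i) (x (i + 1)))
    (hprod : ∀ i, gp (x (i + 1)) (x i) (x (i + 2)) ≤ c) :
    ∀ N, dist (x 0) (x N) + dist (x N) (x (N + 1)) - 2 * (c + δ) ≤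
      dist (x 0) (x (N + 1)) := by
  intro N
  have hA := chain_gp δ c m hδ hc hm hhyp x hstep hprod N
  have e : dist (x 0) (x (N + 1)) =
      dist (x 0) (x N) + dist (x (N + 1)) (x N) - 2 * gp (x N) (x 0) (x (N + 1)) :=
    dist_gp _ _ _
  have := dist_comm (x (N + 1)) (x N)
  linarith

end aux

theorem stmt8 {X : Type*} [MetricSpace X] (δ : ℝ) (hδ : 0 < δ)
    (hgeo : ∀ x y : X, ∃ f : ℝ → X, IsGeodesic f x y)
    (hhyp : ∀ o x y z : X, min (gp o x z) (gp o z y) - δ ≤ gp o x y)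
    (g h : X ≃ᵢ X) (o : X)
    (hyp : (1 / 4) * min (dist (g o) o) (dist (h o) o) ≥
      max (gp o (g o) (h⁻¹ o)) (gp o (g⁻¹ o) (h o)) + δ) :
    (∀ n : ℕ, 1 ≤ n →
      dist o (((g * h) ^ n) o) ≥ (n / 2 : ℝ) * (dist o (g o) + dist o (h o))) ∧
    ∃ τ : ℝ, Tendsto (fun n : ℕ => dist o (((g * h) ^ n) o) / n) atTop (𝓝 τ) ∧
      τ ≥ (dist o (g o) + dist o (h o)) / 2 ∧ 0 < τ := by
  set c : ℝ := max (gp o (g o) (h⁻¹ o)) (gp o (g⁻¹ o) (h o)) with hc_def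
  set m : ℝ := min (dist (g o) o) (dist (h o) o) with hm_def
  have hc0 : 0 ≤ c := le_trans (gp_nonneg o (g o) (h⁻¹ o)) (le_max_left _ _)
  have hm4 : 4 * (c + δ) ≤ m := by
    have : c + δ ≤ (1 / 4) * m := hyp
    linarith
  have hm0 : 0 < m := by linarith
  -- the chain of points
  set x : ℕ → X := fun k => ((g * h) ^ (k / 2)) (if Even k then o else g o) with hx_def
  have hx_even : ∀ k : ℕ, x (2 * k) = ((g * h) ^ k) o := by
    intro k
    simp [hx_def, Nat.mul_div_cancel_left k (by norm_num : 0 < 2)]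
  have hx_odd : ∀ k : ℕ, x (2 * k + 1) = ((g * h) ^ k) (g o) := by
    intro k
    have h1 : ¬ Even (2 * k + 1) := by simp [Nat.even_add_one, parity_simps]
    have h2 : (2 * k + 1) / 2 = k := by omega
    simp [hx_def, h1, h2]
  have hgh : ∀ (k : ℕ) (a : X), ((g * h) ^ (k + 1)) a = ((g * h) ^ k) (g (h a)) := by
    intro k a
    rw [pow_succ, IsometryEquiv.mul_apply, IsometryEquiv.mul_apply]
  -- step lengths
  have hstep_even : ∀ k : ℕ, dist (x (2 * k)) (x (2 * k + 1)) = dist o (g o) := by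
    intro k
    rw [hx_even, hx_odd, IsometryEquiv.dist_eq]
  have hstep_odd : ∀ k : ℕ, dist (x (2 * k + 1)) (x (2 * k + 2)) = dist o (h o) := by
    intro k
    have e : (2 * k + 2) = 2 * (k + 1) := by ring
    rw [e, hx_odd, hx_even, hgh, IsometryEquiv.dist_eq, g.dist_eq]
  have hmg : m ≤ dist o (g o) := by rw [dist_comm]; exact min_le_left _ _
  have hmh : m ≤ dist o (h o) := by rw [dist_comm]; exact min_le_right _ _
  have hstep : ∀ i : ℕ, m ≤ dist (x i) (x (i + 1)) := by
    intro i
    rcases Nat.even_or_odd i with ⟨k, hk⟩ | ⟨k, hk⟩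
    · subst hk
      rw [show k + k = 2 * k by ring, hstep_even]
      exact hmg
    · subst hk
      rw [show 2 * k + 1 + 1 = 2 * k + 2 by ring, hstep_odd]
      exact hmh
  -- products
  have hprod : ∀ i : ℕ, gp (x (i + 1)) (x i) (x (i + 2)) ≤ c := by
    intro i
    rcases Nat.even_or_odd i with ⟨k, hk⟩ | ⟨k, hk⟩
    · -- i = 2k : basepoint x (2k+1) = (gh)^k (g o)
      subst hk
      rw [show k + k = 2 * k by ring]
      rw [show 2 * k + 2 = 2 * (k + 1) by ring, hx_odd, hx_even, hx_even, hgh]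
      rw [gp_isom ((g * h) ^ k)]
      have e : gp o (g⁻¹ o) (h o) = gp (g o) o (g (h o)) := by
        have := gp_isom g⁻¹ (g o) o (g (h o))
        simpa using this
      rw [← e]
      exact le_max_right _ _
    · -- i = 2k+1 : basepoint x (2k+2) = (gh)^{k+1} o
      subst hk
      rw [show 2 * k + 1 + 1 = 2 * (k + 1) by ring,
        show 2 * k + 1 + 2 = 2 * (k + 1) + 1 by ring, hx_even, hx_odd, hx_odd]
      have e : ((g * h) ^ k) (g o) = ((g * h) ^ (k + 1)) (h⁻¹ o) := by
        rw [hgh, IsometryEquiv.apply_inv_self]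
      rw [e, gp_isom ((g * h) ^ (k + 1)), gp_comm]
      exact le_max_left _ _
  have hx0 : x 0 = o := by simp [hx_def]
  have hchain := chain_dist δ c m hδ hc0 hm4 hhyp x hstep hprod
  -- main distance estimate
  have hDn : ∀ n : ℕ, (n : ℝ) * (dist o (g o) + dist o (h o)) - (n : ℝ) * (4 * (c + δ)) ≤
      dist (x 0) (x (2 * n)) := by
    intro n
    induction n with
    | zero => simp
    | succ n ih =>
      have h1 := hchain (2 * n)
      have h2 := hchain (2 * n + 1)
      have e1 := hstep_even n
      have e2 := hstep_odd n
      have e3 : 2 * (n + 1) = 2 * n + 1 + 1 := by ring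
      rw [e3]
      push_cast
      rw [show (2 : ℕ) * n + 2 = 2 * n + 1 + 1 by ring] at e2
      linarith
  have hmS : 2 * m ≤ dist o (g o) + dist o (h o) := by linarith
  have main : ∀ n : ℕ, 1 ≤ n →
      dist o (((g * h) ^ n) o) ≥ (n / 2 : ℝ) * (dist o (g o) + dist o (h o)) := by
    intro n _
    have hD := hDn n
    rw [hx0, hx_even] at hD
    have hn0 : (0 : ℝ) ≤ (n : ℝ) := Nat.cast_nonneg n
    have h1 : (n : ℝ) * (4 * (c + δ)) ≤ (n : ℝ) * m :=
      mul_le_mul_of_nonneg_left hm4 hn0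
    have h2 : (n : ℝ) * (2 * m) ≤ (n : ℝ) * (dist o (g o) + dist o (h o)) :=
      mul_le_mul_of_nonneg_left hmS hn0
    have : (n / 2 : ℝ) * (dist o (g o) + dist o (h o)) ≤
        (n : ℝ) * (dist o (g o) + dist o (h o)) - (n : ℝ) * (4 * (c + δ)) := by nlinarith
    exact le_trans this hD
  refine ⟨main, ?_⟩
  -- subadditivity and the limit
  set u : ℕ → ℝ := fun n => dist o (((g * h) ^ n) o) with hu_def
  have hkey : ∀ p q : ℕ, ((g * h) ^ (p + q)) o = ((g * h) ^ p) (((g * h) ^ q) o) := by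
    intro p q
    rw [pow_add, IsometryEquiv.mul_apply]
  have hsub : Subadditive u := by
    intro p q
    have t := dist_triangle o (((g * h) ^ p) o) (((g * h) ^ (p + q)) o)
    show dist o (((g * h) ^ (p + q)) o) ≤
      dist o (((g * h) ^ p) o) + dist o (((g * h) ^ q) o)
    have e' : dist (((g * h) ^ p) o) (((g * h) ^ (p + q)) o) =
        dist o (((g * h) ^ q) o) := by rw [hkey, IsometryEquiv.dist_eq]
    linarith
  have hbdd : BddBelow (Set.range fun n : ℕ => u n / n) := by
    refine ⟨0, ?_⟩
    rintro _ ⟨n, rfl⟩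
    positivity
  have hτge : ∀ᶠ n : ℕ in atTop, (dist o (g o) + dist o (h o)) / 2 ≤ u n / n := by
    filter_upwards [eventually_ge_atTop 1] with n hn
    have hmain := main n hn
    have hn0 : (0 : ℝ) < (n : ℝ) := by exact_mod_cast Nat.pos_of_ne_zero (by omega)
    have hun : u n = dist o (((g * h) ^ n) o) := rfl
    rw [le_div_iff₀ hn0, hun]
    linarith
  have hτ : hsub.lim ≥ (dist o (g o) + dist o (h o)) / 2 :=
    ge_of_tendsto (hsub.tendsto_lim hbdd) hτge
  refine ⟨hsub.lim, hsub.tendsto_lim hbdd, hτ, ?_⟩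
  linarith
end

section
/- Let h be a loxodromic element of a group G acting properly on a proper hyperbolic space, with E⁺(h) = {g : ∃n > 0, ghⁿg^{−1} = hⁿ} of index at most 2 in E(h), and let E*(h) denote the set of torsion elements of E⁺(h), assumed to be a finite subgroup. Then for any g ∈ E(h) \ E⁺(h), the square g² lies in E*(h). -/
open Filter Topology

/-- The maximal elementary subgroup `E(h)` (as a set). -/
def Econj {G : Type*} [Group G] (h : G) : Set G :=
  {g : G | ∃ n : ℕ, 0 < n ∧ (g * h ^ n * g⁻¹ = h ^ n ∨ g * h ^ n * g⁻¹ = (h ^ n)⁻¹)}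

/-- The orientation-preserving part `E⁺(h)` (as a set). -/
def EconjP {G : Type*} [Group G] (h : G) : Set G :=
  {g : G | ∃ n : ℕ, 0 < n ∧ g * h ^ n * g⁻¹ = h ^ n}

/-- The torsion elements `E*(h)` of `E⁺(h)`. -/
def Etor {G : Type*} [Group G] (h : G) : Set G :=
  {g : G | g ∈ EconjP h ∧ IsOfFinOrder g}


noncomputable def gpr {X : Type*} [MetricSpace X] (base x y : X) : ℝ :=
  (dist x base + dist y base - dist x y) / 2

theorem gpr_comm {X : Type*} [MetricSpace X] (base x y : X) : gpr base x y = gpr base y x := by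
  simp only [gpr, dist_comm x y]; ring

theorem gpr_le {X : Type*} [MetricSpace X] (base x y base' x' y' : X) :
    gpr base x y ≤ gpr base' x' y' + (dist base base' + dist x x' + dist y y') := by
  have h1 := dist_triangle4 x x' base' base
  have h2 := dist_triangle4 y y' base' base
  have h3 := dist_triangle4 x' x y y'
  have c1 : dist base' base = dist base base' := dist_comm _ _
  have c2 : dist x' x = dist x x' := dist_comm _ _
  have c3 : dist y' y = dist y y' := dist_comm _ _
  simp only [gpr]
  linarith

theorem chain_lemma (v : ℕ → ℝ) (ρ δ lam : ℝ) (hδ : 0 < δ) (hρ : 0 ≤ ρ)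
    (hv1 : v 1 = lam + 2*ρ + 2*δ) (hlam : 0 < lam) (hv0 : v 0 = 0)
    (hstep : ∀ i : ℕ, min ((v 1 + v (i+1) - v (i+2))/2) ((v (i+1) + v 1 - v i)/2) - δ ≤ ρ) :
    ∀ i : ℕ, v i + lam ≤ v (i+1) := by
  intro i
  induction i with
  | zero => rw [hv0, hv1]; linarith
  | succ n ih =>
    have hs := hstep n
    have h2 : ρ + δ < (v (n+1) + v 1 - v n)/2 := by rw [hv1]; linarith
    have hfirst : (v 1 + v (n+1) - v (n+2))/2 ≤ ρ + δ := by
      rcases min_le_iff.mp (by linarith : min ((v 1 + v (n+1) - v (n+2))/2) ((v (n+1) + v 1 - v n)/2) ≤ ρ + δ) with hc | hc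
      · exact hc
      · linarith
    rw [hv1] at hfirst
    linarith

theorem chain_growth (v : ℕ → ℝ) (lam : ℝ) (hv0 : v 0 = 0)
    (hc : ∀ i : ℕ, v i + lam ≤ v (i+1)) : ∀ i : ℕ, (i : ℝ) * lam ≤ v i := by
  intro i
  induction i with
  | zero => simp [hv0]
  | succ n ih =>
    have := hc n
    push_cast
    linarith

theorem aux_bound {G : Type*} {X : Type*} [Group G] [MetricSpace X] [MulAction G X]
    (hiso : ∀ γ : G, Isometry fun x : X => γ • x)
    {δ : ℝ} (hδ : 0 < δ)
    (hhyp : ∀ o x y z : X,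
      ((dist x o + dist z o - dist x z) / 2) ⊓ ((dist z o + dist y o - dist z y) / 2) - δ ≤
        (dist x o + dist y o - dist x y) / 2)
    (o : X) (H g b : G)
    (hconj : g * H * g⁻¹ = H⁻¹)
    (hbg : g * b * g⁻¹ = b)
    (hbH : Commute b H)
    (hgap : dist o (H • o) + 4*δ + 1 ≤ dist o ((H*H) • o)) :
    dist o (b • o) ≤
      3*(dist o (H • o) - dist o ((H*H) • o)/2) + 10*δ + 3 * dist o (g • o) := by
  set w : ℤ → ℝ := fun z => dist o ((H ^ z) • o) with hw
  have hhyp' : ∀ base x y z : X, min (gpr base x z) (gpr base z y) - δ ≤ gpr base x y :=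
    fun base x y z => hhyp base x y z
  have w_calc : ∀ i j : ℤ, dist ((H^i) • o) ((H^j) • o) = w (j - i) := by
    intro i j
    have e : (H^j) • o = (H^i) • ((H^(j-i)) • o) := by
      rw [smul_smul, ← zpow_add]
      ring_nf
    rw [e, (hiso (H^i)).dist_eq]
  have w0 : w 0 = 0 := by simp [hw]
  have w_neg : ∀ z : ℤ, w (-z) = w z := by
    intro z
    have h1 : dist ((H^z) • o) ((H^(0:ℤ)) • o) = w (-z) := by rw [w_calc]; ring_nf
    have h2 : dist ((H^(0:ℤ)) • o) ((H^z) • o) = w z := by rw [w_calc]; ring_nf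
    rw [← h1, dist_comm, h2]
  have w_tri : ∀ i j : ℤ, w (i + j) ≤ w i + w j := by
    intro i j
    have e : dist ((H^i) • o) ((H^(i+j)) • o) = w j := by rw [w_calc]; ring_nf
    calc w (i+j) = dist o ((H^(i+j)) • o) := rfl
    _ ≤ dist o ((H^i) • o) + dist ((H^i) • o) ((H^(i+j)) • o) := dist_triangle _ _ _
    _ = w i + w j := by rw [e]
  have hw1 : w 1 = dist o (H • o) := by simp [hw]
  have hw2 : w 2 = dist o ((H*H) • o) := by
    have e : (H : G)^(2:ℤ) = H * H := by
      rw [show (2:ℤ) = 1 + 1 by norm_num, zpow_add, zpow_one]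
    simp only [hw]
    rw [e]
  -- Gromov products along the axis
  have gpw : ∀ i j : ℤ, gpr o ((H^i) • o) ((H^j) • o) = (w i + w j - w (j-i))/2 := by
    intro i j
    simp only [gpr]
    rw [dist_comm ((H^i) • o) o, dist_comm ((H^j) • o) o, w_calc]
  -- constants
  set ρ : ℝ := w 1 - w 2 / 2 with hρdef
  set lam : ℝ := w 2 - w 1 - 2*δ with hlamdef
  have hρ : 0 ≤ ρ := by
    have h11 := w_tri 1 1
    norm_num at h11
    simp only [hρdef]
    linarith
  have hgap' : w 1 + 4*δ + 1 ≤ w 2 := by rw [hw1, hw2]; exact hgap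
  have hlam1 : 1 ≤ lam := by simp only [hlamdef]; linarith
  have hlamδ : δ < lam := by simp only [hlamdef]; linarith
  have hlam : 0 < lam := by linarith
  set v : ℕ → ℝ := fun n => w n with hv
  have hv1w : v 1 = w 1 := by simp only [hv]; norm_num
  have hv0' : v 0 = 0 := by simp only [hv]; norm_num [w0]
  have hv1' : v 1 = lam + 2*ρ + 2*δ := by
    rw [hv1w]; simp only [hlamdef, hρdef]; ring
  -- chain step
  have hstep : ∀ i : ℕ, min ((v 1 + v (i+1) - v (i+2))/2) ((v (i+1) + v 1 - v i)/2) - δ ≤ ρ := by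
    intro i
    have inst := hhyp' o ((H^(1:ℤ)) • o) ((H^(-1:ℤ)) • o) ((H^(-(((i+1):ℕ)):ℤ)) • o)
    rw [gpw 1 (-(((i+1):ℕ):ℤ)), gpw (-(((i+1):ℕ):ℤ)) (-1), gpw 1 (-1)] at inst
    have r1 : w (-((((i+1):ℕ)):ℤ)) = v (i+1) := w_neg _
    have r2 : w (-(((i+1):ℕ):ℤ) - 1) = v (i+2) := by
      rw [show (-(((i+1):ℕ):ℤ) - 1) = -(((i+2):ℕ):ℤ) by push_cast; ring, w_neg]
    have r3 : w (-1 - -(((i+1):ℕ):ℤ)) = v i := by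
      rw [show (-1 - -(((i+1):ℕ):ℤ)) = ((i:ℕ):ℤ) by push_cast; ring]
    have r4 : w (-1:ℤ) = w 1 := w_neg 1
    have r5 : w (-1 - 1 : ℤ) = w 2 := by
      rw [show (-1 - 1 : ℤ) = -2 by norm_num, w_neg]
    rw [r1, r2, r3, r4, r5] at inst
    rw [hv1w]
    have : (w 1 + w 1 - w 2)/2 = ρ := by simp only [hρdef]; ring
    linarith [inst]
  have hchain := chain_lemma v ρ δ lam hδ hρ hv1' hlam hv0' hstep
  have hgrow := chain_growth v lam hv0' hchain
  -- doubling bound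
  have hdouble : ∀ kk : ℕ, 2 * v (kk+1) - 2*ρ - 4*δ ≤ w (2*((((kk+1):ℕ)):ℤ)) := by
    intro kk
    have inst := hhyp' o ((H^(-(((kk+1):ℕ)):ℤ)) • o) ((H^(1:ℤ)) • o) ((H^((((kk+1):ℕ)):ℤ)) • o)
    rw [gpw (-(((kk+1):ℕ):ℤ)) ((((kk+1):ℕ)):ℤ), gpw ((((kk+1):ℕ)):ℤ) 1, gpw (-(((kk+1):ℕ):ℤ)) 1] at inst
    have r1 : w (-((((kk+1):ℕ)):ℤ)) = v (kk+1) := w_neg _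
    have r2 : w ((((kk+1):ℕ):ℤ) - -(((kk+1):ℕ):ℤ)) = w (2*((((kk+1):ℕ)):ℤ)) := by
      congr 1; ring
    have r3 : w (1 - (((kk+1):ℕ):ℤ)) = v kk := by
      rw [show (1 - (((kk+1):ℕ):ℤ)) = -(((kk:ℕ)):ℤ) by push_cast; ring, w_neg]
    have r4 : w (1 - -(((kk+1):ℕ):ℤ)) = v (kk+2) := by
      rw [show (1 - -(((kk+1):ℕ):ℤ)) = (((kk+2):ℕ):ℤ) by push_cast; ring]
    rw [r1, r2, r3, r4] at inst
    have hnext : v (kk+1) + lam ≤ v (kk+2) := hchain (kk+1)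
    have hprev : v kk + lam ≤ v (kk+1) := hchain kk
    -- RHS of inst is small
    have hrhs : (v (kk+1) + w 1 - v (kk+2))/2 ≤ ρ + δ := by
      linarith [hv1w, hv1']
    have hsecond : ρ + 2*δ < (w ((((kk+1):ℕ)):ℤ) + w 1 - v kk)/2 := by
      have e : w ((((kk+1):ℕ)):ℤ) = v (kk+1) := rfl
      rw [e]
      linarith [hv1w, hv1', hprev, hlamδ]
    have hmin : min ((v (kk+1) + v (kk+1) - w (2*((((kk+1):ℕ)):ℤ)))/2)
        ((w ((((kk+1):ℕ)):ℤ) + w 1 - v kk)/2) ≤ ρ + 2*δ := by linarith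
    rcases min_le_iff.mp hmin with hc | hc
    · linarith
    · linarith
  -- setup for the main argument
  set q : X := b • o with hq
  set D : ℝ := dist o q with hD
  set r : ℝ := dist o (g • o) with hr
  have hconjz : ∀ z : ℤ, g * H^z * g⁻¹ = H^(-z) := by
    intro z
    have h1 : (MulAut.conj g) (H^z) = ((MulAut.conj g) H)^z := map_zpow _ _ _
    rw [MulAut.conj_apply, MulAut.conj_apply] at h1
    rw [h1, hconj, inv_zpow, zpow_neg]
  have hq_shift : ∀ z : ℤ, (H^z) • q = b • ((H^z) • o) := by
    intro z
    rw [hq, smul_smul, smul_smul, ((hbH.zpow_right z).symm.eq)]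
  have dq_calc : ∀ i j : ℤ, dist ((H^i) • q) ((H^j) • q) = w (j - i) := by
    intro i j
    rw [hq_shift, hq_shift, (hiso b).dist_eq, w_calc]
  have dqz : ∀ z : ℤ, dist q ((H^z) • q) = w z := by
    intro z
    have := dq_calc 0 z
    simpa using this
  have dpq : ∀ z : ℤ, dist ((H^z) • o) ((H^z) • q) = D := by
    intro z
    rw [hD, hq]
    exact (hiso (H^z)).dist_eq o (b • o)
  -- pick k
  set kk : ℕ := ⌈D + ρ + 4*δ + 1⌉₊ with hkk
  set K : ℤ := (((kk+1):ℕ) : ℤ) with hK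
  have hwK_ge : D + ρ + 4*δ + 1 ≤ w K := by
    have h1 : (((kk+1):ℕ):ℝ) * lam ≤ v (kk+1) := hgrow (kk+1)
    have h2 : D + ρ + 4*δ + 1 ≤ ((kk:ℕ):ℝ) := by
      have := Nat.le_ceil (D + ρ + 4*δ + 1)
      rw [← hkk] at this
      exact this
    have h3 : ((kk:ℕ):ℝ) ≤ (((kk+1):ℕ):ℝ) := by push_cast; linarith
    have h4 : (((kk+1):ℕ):ℝ) ≤ (((kk+1):ℕ):ℝ) * lam := by
      nlinarith [show (0:ℝ) ≤ (((kk+1):ℕ):ℝ) from Nat.cast_nonneg _]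
    have h5 : v (kk+1) = w K := rfl
    linarith
  have hw2K_ge : 2 * w K - 2*ρ - 4*δ ≤ w (2*K) := by
    have := hdouble kk
    exact this
  have hw2K_le : w (2*K) ≤ 2 * w K := by
    have := w_tri K K
    rw [show K + K = 2*K by ring] at this
    linarith
  -- the four points
  set Pp : X := (H^K) • o with hPp
  set Pm : X := (H^(-K)) • o with hPm
  set Ap : X := (H^(-K)) • q with hAp
  set Bp : X := (H^K) • q with hBp
  have f1 : dist Pp o = w K := by rw [dist_comm]
  have f2 : dist Pm o = w K := by rw [dist_comm]; exact w_neg K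
  have f3 : dist Pp Pm = w (2*K) := by
    rw [hPp, hPm, w_calc, show -K - K = -(2*K) by ring, w_neg]
  have f4 : dist Ap q = w K := by
    rw [dist_comm, hAp, dqz, w_neg]
  have f5 : dist Bp q = w K := by
    rw [dist_comm, hBp, dqz]
  have f6 : dist Ap Bp = w (2*K) := by
    rw [hAp, hBp, dq_calc, show K - -K = 2*K by ring]
  have f7 : dist Pp Bp = D := dpq K
  have f8 : dist Pm Ap = D := dpq (-K)
  -- step (iii)
  have e_ba : gpr q Bp Ap ≤ ρ + 2*δ := by
    simp only [gpr]
    rw [f5, f4, dist_comm Bp Ap, f6]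
    linarith
  have e_pma : w K - D ≤ gpr q Pm Ap := by
    simp only [gpr]
    have tri := dist_triangle Ap Pm q
    have c : dist Ap Pm = dist Pm Ap := dist_comm _ _
    rw [f4] at tri ⊢
    rw [f8] at c
    linarith
  have i3 := hhyp' q Bp Ap Pm
  have e_bpm : gpr q Bp Pm ≤ ρ + 3*δ := by
    rcases min_le_iff.mp (show min (gpr q Bp Pm) (gpr q Pm Ap) ≤ ρ + 3*δ by linarith) with hc | hc
    · exact hc
    · linarith [hwK_ge]
  -- step (iv)
  have e_ppb : w K - D ≤ gpr q Pp Bp := by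
    simp only [gpr]
    have tri := dist_triangle Bp Pp q
    have c : dist Bp Pp = dist Pp Bp := dist_comm _ _
    rw [f5] at tri ⊢
    rw [f7] at c
    linarith
  have i4 := hhyp' q Pm Bp Pp
  have e_pmbp : gpr q Pm Bp = gpr q Bp Pm := gpr_comm _ _ _
  have e_pmpp : gpr q Pm Pp ≤ ρ + 4*δ := by
    rcases min_le_iff.mp (show min (gpr q Pm Pp) (gpr q Pp Bp) ≤ ρ + 4*δ by
      rw [e_pmbp] at i4; linarith) with hc | hc
    · exact hc
    · linarith [hwK_ge]
  -- step (v)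
  have e_sum : dist Pm q + dist Pp q ≤ 2 * w K + 2*ρ + 8*δ := by
    have : gpr q Pm Pp = (dist Pm q + dist Pp q - dist Pm Pp)/2 := rfl
    have c : dist Pm Pp = dist Pp Pm := dist_comm _ _
    rw [c, f3] at this
    rw [this] at e_pmpp
    linarith
  -- step (vii)
  have e_pppm : gpr o Pp Pm ≤ ρ + 2*δ := by
    simp only [gpr]
    rw [f1, f2, f3]
    linarith
  have i7 := hhyp' o Pp Pm q
  set α : ℝ := gpr o q Pp with hα
  set β : ℝ := gpr o q Pm with hβ
  have e_c7 : gpr o Pp q = α := gpr_comm _ _ _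
  have hminαβ : min α β ≤ ρ + 3*δ := by
    rw [e_c7] at i7
    calc min α β ≤ gpr o Pp Pm + δ := by linarith
    _ ≤ ρ + 3*δ := by linarith
  -- flip symmetry
  have gpr_iso : ∀ (γ : G) (bx x y : X), gpr (γ•bx) (γ•x) (γ•y) = gpr bx x y := by
    intro γ bx x y
    simp only [gpr, (hiso γ).dist_eq]
  set o' : X := g⁻¹ • o with ho'
  have e_o : g • o' = o := smul_inv_smul g o
  have e_q : g • (b • o') = q := by
    rw [ho', smul_smul, smul_smul, hbg, hq]
  have e_p : g • ((H^K) • o') = Pm := by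
    rw [ho', smul_smul, smul_smul, hconjz K, hPm]
  have flip1 : β = gpr o' (b • o') ((H^K) • o') := by
    rw [hβ, ← e_o, ← e_q, ← e_p, gpr_iso]
  have doo' : dist o' o = r := by
    have : dist o' o = dist (g • o') (g • o) := ((hiso g).dist_eq o' o).symm
    rw [e_o] at this
    rw [this, hr]
  have dbb : dist (b • o') (b • o) = r := by rw [(hiso b).dist_eq]; exact doo'
  have dHH : dist ((H^K) • o') ((H^K) • o) = r := by rw [(hiso (H^K)).dist_eq]; exact doo'
  have doo'2 : dist o o' = r := by rw [dist_comm]; exact doo'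
  have dbb2 : dist (b • o) (b • o') = r := by rw [dist_comm]; exact dbb
  have dHH2 : dist ((H^K) • o) ((H^K) • o') = r := by rw [dist_comm]; exact dHH
  have hαq : α = gpr o (b • o) ((H^K) • o) := by rw [hα, hq, hPp]
  have flipa : β ≤ α + 3*r := by
    rw [flip1, hαq]
    have := gpr_le o' (b • o') ((H^K) • o') o (b • o) ((H^K) • o)
    linarith
  have flipb : α ≤ β + 3*r := by
    rw [flip1, hαq]
    have := gpr_le o (b • o) ((H^K) • o) o' (b • o') ((H^K) • o')
    linarith
  -- combine
  have hsum_ub : α + β ≤ 2*ρ + 6*δ + 3*r := by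
    rcases min_le_iff.mp hminαβ with hc | hc
    · linarith
    · linarith
  have hsum_lb : D - ρ - 4*δ ≤ α + β := by
    have hα2 : α = (dist q o + dist Pp o - dist q Pp)/2 := rfl
    have hβ2 : β = (dist q o + dist Pm o - dist q Pm)/2 := rfl
    have c1 : dist q o = D := by rw [dist_comm]
    have c2 : dist q Pp = dist Pp q := dist_comm _ _
    have c3 : dist q Pm = dist Pm q := dist_comm _ _
    rw [c1, f1, c2] at hα2
    rw [c1, f2, c3] at hβ2
    linarith
  have hfinal : D ≤ 3*ρ + 10*δ + 3*r := by linarith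
  rw [← hw1, ← hw2]
  calc dist o (b • o) = D := rfl
  _ ≤ 3*ρ + 10*δ + 3*r := hfinal
  _ = 3*(w 1 - w 2/2) + 10*δ + 3 * dist o (g • o) := by rw [hρdef, hr]

theorem finOrderSq {G : Type*} {X : Type*} [Group G] [MetricSpace X] [ProperSpace X]
    [MulAction G X]
    (hiso : ∀ g : G, Isometry fun x : X => g • x)
    (δ : ℝ) (hδ : 0 < δ)
    (hhyp : ∀ o x y z : X,
      ((dist x o + dist z o - dist x z) / 2) ⊓ ((dist z o + dist y o - dist z y) / 2) - δ ≤
        (dist x o + dist y o - dist x y) / 2)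
    (hproper : ∀ (x : X) (R : ℝ), Set.Finite {g : G | dist x (g • x) ≤ R})
    (h : G) (o : X) (τ : ℝ) (hτpos : 0 < τ)
    (hlox : Tendsto (fun n : ℕ => dist o ((h ^ n) • o) / n) atTop (𝓝 τ))
    (g : G) (N : ℕ) (hN : 0 < N) (hNconj : g * h ^ N * g⁻¹ = (h ^ N)⁻¹) :
    IsOfFinOrder (g ^ 2) := by
  -- subadditivity of displacement
  have hsub : ∀ i j : ℕ, dist o ((h^(i+j)) • o) ≤ dist o ((h^i) • o) + dist o ((h^j) • o) := by
    intro i j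
    have e : (h^(i+j)) • o = (h^i) • ((h^j) • o) := by rw [smul_smul, ← pow_add]
    calc dist o ((h^(i+j)) • o) ≤ dist o ((h^i) • o) + dist ((h^i) • o) ((h^(i+j)) • o) :=
          dist_triangle _ _ _
    _ = dist o ((h^i) • o) + dist o ((h^j) • o) := by rw [e, (hiso (h^i)).dist_eq]
  have humul : ∀ n k : ℕ, dist o ((h^(n*k)) • o) ≤ k * dist o ((h^n) • o) := by
    intro n k
    induction k with
    | zero => simp
    | succ m ih =>
      have : n * (m+1) = n*m + n := by ring
      rw [this]
      calc dist o ((h^(n*m+n)) • o) ≤ dist o ((h^(n*m)) • o) + dist o ((h^n) • o) := hsub _ _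
      _ ≤ m * dist o ((h^n) • o) + dist o ((h^n) • o) := by linarith
      _ = (m+1 : ℕ) * dist o ((h^n) • o) := by push_cast; ring
  -- lower bound on displacement: n*τ ≤ u n
  have hlower : ∀ n : ℕ, 0 < n → (n:ℝ) * τ ≤ dist o ((h^n) • o) := by
    intro n hn
    have hmono : StrictMono (fun k : ℕ => n * k) := fun a b hab => by
      simpa using (Nat.mul_lt_mul_left hn).mpr hab
    have hsb : Tendsto (fun k : ℕ => dist o ((h^(n*k)) • o) / (n*k : ℕ)) atTop (𝓝 τ) :=
      hlox.comp hmono.tendsto_atTop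
    have hev : ∀ᶠ k : ℕ in atTop, dist o ((h^(n*k)) • o) / ((n*k : ℕ):ℝ) ≤ dist o ((h^n) • o) / n := by
      filter_upwards [eventually_ge_atTop 1] with k hk
      have hnk : (0:ℝ) < ((n*k : ℕ):ℝ) := by
        have : 0 < n*k := Nat.mul_pos hn hk
        exact_mod_cast this
      rw [div_le_div_iff₀ hnk (by exact_mod_cast hn)]
      have := humul n k
      push_cast
      push_cast at this
      nlinarith [dist_nonneg (x := o) (y := (h^n) • o)]
    have := le_of_tendsto hsb hev
    rw [le_div_iff₀ (by exact_mod_cast hn)] at this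
    linarith
  -- find M
  obtain ⟨K, hK⟩ : ∃ K : ℕ, ∀ n ≥ K, dist o ((h^n) • o) / n < τ + τ/4 := by
    have hev : ∀ᶠ n : ℕ in atTop, dist o ((h^n) • o) / n < τ + τ/4 :=
      hlox.eventually (eventually_lt_nhds (by linarith))
    exact eventually_atTop.mp hev
  set t : ℕ := K + ⌈(4*δ+1) / ((3/4) * τ)⌉₊ + 1 with ht
  set M : ℕ := N * t with hM
  have htpos : 0 < t := by omega
  have hMpos : 0 < M := Nat.mul_pos hN htpos
  have hMK : K ≤ M := by
    calc K ≤ t := by omega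
    _ ≤ N * t := Nat.le_mul_of_pos_left t hN
  have hMbig : 4*δ + 1 ≤ (3/4) * τ * M := by
    have h1 : (4*δ+1) / ((3/4) * τ) ≤ (⌈(4*δ+1) / ((3/4) * τ)⌉₊ : ℝ) := Nat.le_ceil _
    have h2 : (⌈(4*δ+1) / ((3/4) * τ)⌉₊ : ℝ) ≤ (M:ℝ) := by
      have : ⌈(4*δ+1) / ((3/4) * τ)⌉₊ ≤ M := by
        calc ⌈(4*δ+1) / ((3/4) * τ)⌉₊ ≤ t := by omega
        _ ≤ M := by rw [hM]; exact Nat.le_mul_of_pos_left t hN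
      exact_mod_cast this
    have h3 : (0:ℝ) < (3/4) * τ := by linarith
    rw [div_le_iff₀ h3] at h1
    nlinarith
  have hgap : dist o ((h^M) • o) + 4*δ + 1 ≤ dist o ((h^(2*M)) • o) := by
    have hup : dist o ((h^M) • o) < (τ + τ/4) * M := by
      have := hK M hMK
      rw [div_lt_iff₀ (by exact_mod_cast hMpos : (0:ℝ) < (M:ℝ))] at this
      linarith
    have hlo : (2*M : ℝ) * τ ≤ dist o ((h^(2*M)) • o) := by
      have := hlower (2*M) (by omega)
      push_cast at this ⊢
      linarith
    push_cast at hlo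
    nlinarith
  -- conjugation facts
  have hconjM : g * h^M * g⁻¹ = (h^M)⁻¹ := by
    have e : (h:G)^M = (h^N)^t := by rw [← pow_mul]
    rw [e, ← conj_pow, hNconj, inv_pow]
  set H : G := h^M with hH
  have haH : (g^2) * H * (g^2)⁻¹ = H := by
    have e1 : (g^2) * H * (g^2)⁻¹ = g * (g * H * g⁻¹) * g⁻¹ := by rw [pow_two, mul_inv_rev]; group
    rw [e1, hconjM]
    calc g * (h^M)⁻¹ * g⁻¹ = (g * h^M * g⁻¹)⁻¹ := by group
    _ = ((h^M)⁻¹)⁻¹ := by rw [hconjM]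
    _ = H := inv_inv _
  have hcomm : Commute (g^2) H := mul_inv_eq_iff_eq_mul.mp haH
  have hgap' : dist o (H • o) + 4*δ + 1 ≤ dist o ((H*H) • o) := by
    have e : H * H = h^(2*M) := by rw [hH, ← pow_add, two_mul]
    rw [e, hH]
    exact hgap
  have hbound : ∀ m : ℕ, dist o (((g^2)^m) • o) ≤
      3*(dist o (H • o) - dist o ((H*H) • o)/2) + 10*δ + 3 * dist o (g • o) := by
    intro m
    exact aux_bound hiso hδ hhyp o H g ((g^2)^m) hconjM
      (by group) (hcomm.pow_left m) hgap'
  set C : ℝ := 3*(dist o (H • o) - dist o ((H*H) • o)/2) + 10*δ + 3 * dist o (g • o) with hC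
  have hfin := hproper o C
  obtain ⟨i, -, j, -, hne, heq⟩ :=
    Set.infinite_univ.exists_ne_map_eq_of_mapsTo
      (f := fun m : ℕ => (g^2)^m) (fun m _ => hbound m) hfin
  have key : ∀ i j : ℕ, i < j → (g^2)^i = (g^2)^j → IsOfFinOrder (g^2) := by
    intro i j hij heq
    have hpe : (g^2)^i * (g^2)^(j-i) = (g^2)^i * 1 := by
      rw [mul_one, ← pow_add, Nat.add_sub_cancel' hij.le]
      exact heq.symm
    have : (g^2)^(j-i) = 1 := mul_left_cancel hpe
    exact isOfFinOrder_iff_pow_eq_one.mpr ⟨j-i, by omega, this⟩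
  rcases hne.lt_or_gt with hij | hij
  · exact key i j hij heq
  · exact key j i hij heq.symm

theorem stmt12 {G : Type*} {X : Type*} [Group G] [MetricSpace X] [ProperSpace X]
    [MulAction G X]
    (hiso : ∀ g : G, Isometry fun x : X => g • x)
    (δ : ℝ) (hδ : 0 < δ)
    (hhyp : ∀ o x y z : X,
      ((dist x o + dist z o - dist x z) / 2) ⊓ ((dist z o + dist y o - dist z y) / 2) - δ ≤
        (dist x o + dist y o - dist x y) / 2)
    (hproper : ∀ (x : X) (R : ℝ), Set.Finite {g : G | dist x (g • x) ≤ R})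
    (h : G) (o : X) (τ : ℝ) (hτpos : 0 < τ)
    (hlox : Tendsto (fun n : ℕ => dist o ((h ^ n) • o) / n) atTop (𝓝 τ))
    -- `E⁺(h)` has index at most 2 in `E(h)`:
    (hindex : ∀ g₁ ∈ Econj h, ∀ g₂ ∈ Econj h,
      g₁ ∉ EconjP h → g₂ ∉ EconjP h → g₁⁻¹ * g₂ ∈ EconjP h)
    -- `E*(h)` is assumed to be a finite subgroup:
    (hEtorFin : (Etor h).Finite)
    (hEtorMul : ∀ a ∈ Etor h, ∀ b ∈ Etor h, a * b ∈ Etor h) :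
    ∀ g ∈ Econj h, g ∉ EconjP h → g ^ 2 ∈ Etor h := by
  intro g hg hgP
  obtain ⟨N, hN, hc⟩ := hg
  have hNconj : g * h ^ N * g⁻¹ = (h ^ N)⁻¹ := by
    rcases hc with hc | hc
    · exact absurd ⟨N, hN, hc⟩ hgP
    · exact hc
  refine ⟨⟨N, hN, ?_⟩, ?_⟩
  · have e1 : (g^2) * (h^N) * (g^2)⁻¹ = g * (g * (h^N) * g⁻¹) * g⁻¹ := by
      rw [pow_two, mul_inv_rev]; group
    rw [e1, hNconj]
    calc g * (h^N)⁻¹ * g⁻¹ = (g * h^N * g⁻¹)⁻¹ := by group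
    _ = ((h^N)⁻¹)⁻¹ := by rw [hNconj]
    _ = h^N := inv_inv _
  · exact finOrderSq hiso δ hδ hhyp hproper h o τ hτpos hlox g N hN hNconj
end

section
/- Let X be a δ-hyperbolic geodesic space, and suppose the shortest-point projection π_γ to a quasi-geodesic γ is C-contracting. Then for all z, w ∈ X whose projections satisfy d(π_γ(z), π_γ(w)) > C, we have diam({π_γ(z), π_γ(w)}) + d(z, π_γ(z)) + d(w, π_γ(w)) ≤ d(z, w) + 4C. -/
open Filter Topology

theorem stmt14 {X : Type*} [MetricSpace X] (δ : ℝ) (hδ : 0 ≤ δ) (C : ℝ) (hC : 0 < C)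
    (hgeo : ∀ x y : X, ∃ f : ℝ → X, IsGeodesic f x y)
    (hhyp : ∀ o x y z : X, min (gp o x z) (gp o z y) - δ ≤ gp o x y)
    (lam c : ℝ) (hlam : 1 ≤ lam) (hc : 0 ≤ c)
    -- `γ` is the image of a `(λ,c)`-quasi-geodesic `q`:
    (γ : Set X) (q : ℝ → X) (hγ : γ = Set.range q)
    (hq : ∀ s t : ℝ, |s - t| / lam - c ≤ dist (q s) (q t) ∧ dist (q s) (q t) ≤ lam * |s - t| + c)
    -- `π` is a nearest-point projection to `γ`:
    (π : X → X) (hπγ : ∀ z : X, π z ∈ γ)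
    (hπ : ∀ z : X, ∀ p ∈ γ, dist z (π z) ≤ dist z p)
    -- `π` is `C`-contracting:
    (hcontr : ∀ (z w : X) (f : ℝ → X), IsGeodesic f z w → C < dist (π z) (π w) →
      (∃ s ∈ Set.Icc (0 : ℝ) (dist z w), dist (π z) (f s) ≤ C) ∧
      (∃ t ∈ Set.Icc (0 : ℝ) (dist z w), dist (π w) (f t) ≤ C)) :
    ∀ z w : X, C < dist (π z) (π w) →
      dist (π z) (π w) + dist z (π z) + dist w (π w) ≤ dist z w + 4 * C := by
  intro z w hzw
  obtain ⟨f, hf⟩ := hgeo z w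
  obtain ⟨⟨s, hs, hfs⟩, ⟨t, ht, hft⟩⟩ := hcontr z w f hf hzw
  obtain ⟨hf0, hfD, hfd⟩ := hf
  have hD : (0:ℝ) ≤ dist z w := dist_nonneg
  have h0 : (0:ℝ) ∈ Set.Icc (0:ℝ) (dist z w) := ⟨le_refl _, hD⟩
  have hDm : dist z w ∈ Set.Icc (0:ℝ) (dist z w) := ⟨hD, le_refl _⟩
  have hzs : dist z (f s) = s := by
    have h := hfd 0 h0 s hs
    rw [hf0] at h
    rw [h, abs_of_nonpos (by linarith [hs.1])]; ring
  have hzt : dist z (f t) = t := by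
    have h := hfd 0 h0 t ht
    rw [hf0] at h
    rw [h, abs_of_nonpos (by linarith [ht.1])]; ring
  have hws : dist w (f s) = dist z w - s := by
    have h := hfd (dist z w) hDm s hs
    rw [hfD] at h
    rw [h, abs_of_nonneg (by linarith [hs.2])]
  have hwt : dist w (f t) = dist z w - t := by
    have h := hfd (dist z w) hDm t ht
    rw [hfD] at h
    rw [h, abs_of_nonneg (by linarith [ht.2])]
  have hst : dist (f s) (f t) = |s - t| := hfd s hs t ht
  have hπzw : dist (π z) (π w) ≤ |s - t| + 2 * C := by
    calc dist (π z) (π w) ≤ dist (π z) (f s) + dist (f s) (f t) + dist (f t) (π w) :=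
          dist_triangle4 _ _ _ _
      _ ≤ C + |s - t| + C := by
          rw [hst]
          gcongr
          rw [dist_comm]; exact hft
      _ = |s - t| + 2 * C := by ring
  rcases le_total s t with hle | hle
  · have h1 : dist z (π z) ≤ s + C := by
      calc dist z (π z) ≤ dist z (f s) + dist (f s) (π z) := dist_triangle _ _ _
        _ ≤ s + C := by rw [hzs]; gcongr; rw [dist_comm]; exact hfs
    have h2 : dist w (π w) ≤ dist z w - t + C := by
      calc dist w (π w) ≤ dist w (f t) + dist (f t) (π w) := dist_triangle _ _ _
        _ ≤ dist z w - t + C := by rw [hwt]; gcongr; rw [dist_comm]; exact hft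
    have habs : |s - t| = t - s := by rw [abs_of_nonpos (by linarith)]; ring
    rw [habs] at hπzw
    linarith
  · have h1 : dist z (π z) ≤ t + C := by
      calc dist z (π z) ≤ dist z (π w) := hπ z (π w) (hπγ w)
        _ ≤ dist z (f t) + dist (f t) (π w) := dist_triangle _ _ _
        _ ≤ t + C := by rw [hzt]; gcongr; rw [dist_comm]; exact hft
    have h2 : dist w (π w) ≤ dist z w - s + C := by
      calc dist w (π w) ≤ dist w (π z) := hπ w (π z) (hπγ z)
        _ ≤ dist w (f s) + dist (f s) (π z) := dist_triangle _ _ _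
        _ ≤ dist z w - s + C := by rw [hws]; gcongr; rw [dist_comm]; exact hfs
    have habs : |s - t| = s - t := abs_of_nonneg (by linarith)
    rw [habs] at hπzw
    linarith
end

section
/- Suppose for every finite symmetric generating set S of a group H, one can find κ ∈ ℕ (independent of S) and a subset T ⊆ S^{≤κ} with #T ≥ #S/(2N₀) (for a constant N₀ independent of S) freely generating a free subgroup, and suppose additionally ω(H,S) ≥ c₀ > 0 for all S. Then there is κ' > 0 with ω(H,S) ≥ κ'·log(#S) for every finite symmetric generating set S of H. -/
/-!
A free subset `T` of the `κ`-ball of `S` yields `#T ^ n` distinct positive words of length `n`,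
all in the `nκ`-ball, so `ω(H,S) ≥ log #T / κ`. When `#S > (2N₀)²` we have
`#T ≥ #S / (2N₀) ≥ √#S`, which gives `ω(H,S) ≥ log #S / (2κ)`; otherwise `log #S` is bounded by a
constant and the uniform bound `ω(H,S) ≥ c₀` suffices.
-/

open Filter Topology

open Pointwise

section WordBall

variable {H : Type*} [Group H] {S : Set H}

theorem one_mem_wordBall (S : Set H) (n : ℕ) : (1 : H) ∈ wordBall S n :=
  ⟨[], by simp⟩

theorem mul_mem_wordBall {m k : ℕ} {a b : H} (ha : a ∈ wordBall S m) (hb : b ∈ wordBall S k) :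
    a * b ∈ wordBall S (m + k) := by
  obtain ⟨l₁, hl₁, hS₁, rfl⟩ := ha
  obtain ⟨l₂, hl₂, hS₂, rfl⟩ := hb
  refine ⟨l₁ ++ l₂, by simpa using add_le_add hl₁ hl₂, ?_, List.prod_append⟩
  simpa [or_imp, forall_and] using ⟨hS₁, hS₂⟩

theorem list_prod_mem_wordBall {κ : ℕ} (l : List H) (hl : ∀ x ∈ l, x ∈ wordBall S κ) :
    l.prod ∈ wordBall S (l.length * κ) := by
  induction l with
  | nil => simpa using one_mem_wordBall S 0
  | cons a t ih =>
    rw [List.prod_cons, List.length_cons, Nat.succ_mul, add_comm]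
    exact mul_mem_wordBall (hl a List.mem_cons_self)
      (ih fun x hx => hl x (List.mem_cons_of_mem a hx))

theorem wordBall_zero_subset (S : Set H) : wordBall S 0 ⊆ {1} := by
  rintro _ ⟨l, hl, -, rfl⟩
  simp [List.length_eq_zero_iff.1 (Nat.le_zero.1 hl)]

theorem wordBall_succ_subset (S : Set H) (n : ℕ) :
    wordBall S (n + 1) ⊆ insert 1 (S * wordBall S n) := by
  rintro _ ⟨_ | ⟨a, t⟩, hlen, hS, rfl⟩
  · exact Set.mem_insert _ _
  · exact Or.inr <| Set.mul_mem_mul (hS a List.mem_cons_self)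
      ⟨t, by simpa using hlen, fun x hx => hS x (List.mem_cons_of_mem a hx), rfl⟩

theorem wordBall_finite (hS : S.Finite) : ∀ n, (wordBall S n).Finite
  | 0 => (Set.finite_singleton 1).subset (wordBall_zero_subset S)
  | n + 1 => ((hS.mul (wordBall_finite hS n)).insert 1).subset (wordBall_succ_subset S n)

end WordBall

namespace FreeGroup

variable {α : Type*}

theorem isReduced_map_true (l : List α) : IsReduced (l.map fun a => (a, true)) := by
  simpa [IsReduced, List.isChain_map] using List.isChain_iff_getElem.mpr fun _ _ => trivial

theorem mk_map_true_injective :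
    Function.Injective fun l : List α => mk (l.map fun a => (a, true)) := by
  classical
  intro l₁ l₂ h
  have hword := congrArg toWord h
  simp only [toWord_mk, (isReduced_map_true _).reduce_eq] at hword
  exact List.map_injective_iff.2 (fun _ _ hab => congrArg Prod.fst hab) hword

theorem list_prod_map_injective_of_lift_injective {G : Type*} [Group G] {f : α → G}
    (hf : Function.Injective (lift f)) : Function.Injective fun l : List α => (l.map f).prod := by
  intro l₁ l₂ h
  apply mk_map_true_injective
  apply hf
  simpa [lift_mk, Function.comp_def] using h

end FreeGroup

theorem pow_ncard_le_card_wordBall {H : Type*} [Group H] {S T : Set H} {κ : ℕ} (hS : S.Finite)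
    (hT : T ⊆ wordBall S κ) (hfree : Function.Injective (FreeGroup.lift (Subtype.val : T → H)))
    (n : ℕ) : T.ncard ^ n ≤ Nat.card (wordBall S (n * κ)) := by
  have := (wordBall_finite hS (n * κ)).to_subtype
  let word : (Fin n → T) → wordBall S (n * κ) := fun w =>
    ⟨((List.ofFn w).map Subtype.val).prod, by
      simpa using list_prod_mem_wordBall ((List.ofFn w).map Subtype.val)
        (by simpa using fun i => hT (w i).2)⟩
  have hword : Function.Injective word := fun w₁ w₂ h =>
    List.ofFn_injective <|
      FreeGroup.list_prod_map_injective_of_lift_injective hfree (congrArg Subtype.val h)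
  simpa [Nat.card_fun, Nat.card_coe_set_eq] using Nat.card_le_card_of_injective word hword

theorem div_le_of_tendsto_div_of_mul_le {f : ℕ → ℝ} {ω c : ℝ} {κ : ℕ}
    (hf : Tendsto (fun n : ℕ => f n / n) atTop (𝓝 ω)) (hκ : 0 < κ)
    (h : ∀ n : ℕ, n * c ≤ f (n * κ)) : c / κ ≤ ω := by
  have hsub : Tendsto (fun n : ℕ => f (n * κ) / (n * κ : ℕ)) atTop (𝓝 ω) :=
    hf.comp (tendsto_atTop_mono (fun n => Nat.le_mul_of_pos_right n hκ) tendsto_id)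
  refine ge_of_tendsto hsub ?_
  filter_upwards [eventually_gt_atTop 0] with n hn
  calc c / κ = (n * c) / (n * κ) := by field_simp
    _ ≤ f (n * κ) / (n * κ : ℕ) := by push_cast; gcongr; exact h n

theorem log_ncard_div_le_of_tendsto {H : Type*} [Group H] {S T : Set H} {κ : ℕ} {ω : ℝ}
    (hS : S.Finite)
    (hω : Tendsto (fun n : ℕ => Real.log (Nat.card (wordBall S n)) / n) atTop (𝓝 ω))
    (hκ : 0 < κ) (hT : T ⊆ wordBall S κ) (hT₀ : 0 < T.ncard)
    (hfree : Function.Injective (FreeGroup.lift (Subtype.val : T → H))) :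
    Real.log T.ncard / κ ≤ ω :=
  div_le_of_tendsto_div_of_mul_le hω hκ fun n => by
    rw [← Real.log_pow]
    exact Real.log_le_log (by positivity)
      (by exact_mod_cast pow_ncard_le_card_wordBall hS hT hfree n)

theorem log_le_two_mul_log_of_sq_lt {a s t : ℝ} (ha : 0 < a) (hs : a ^ 2 < s) (ht : s / a ≤ t) :
    Real.log s ≤ 2 * Real.log t := by
  have hs₀ : 0 ≤ s := (sq_nonneg a).trans hs.le
  have ha_sqrt : a ≤ √s := Real.le_sqrt_of_sq_le hs.le
  have hsqrt_le : √s ≤ t :=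
    calc √s = √s * √s / √s := by field_simp
      _ = s / √s := by rw [Real.mul_self_sqrt hs₀]
      _ ≤ s / a := by gcongr
      _ ≤ t := ht
  calc Real.log s = 2 * Real.log √s := by rw [Real.log_sqrt hs₀]; ring
    _ ≤ 2 * Real.log t := by gcongr; exact Real.sqrt_pos.2 ((pow_pos ha 2).trans hs)

theorem exists_pos_mul_log_le {N₀ c₀ κ : ℝ} (hN₀ : 0 < N₀) (hc₀ : 0 < c₀) (hκ : 0 < κ) :
    ∃ κ' > (0 : ℝ), ∀ s t ω : ℝ, 0 ≤ s → s / (2 * N₀) ≤ t → c₀ ≤ ω →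
      (0 < t → Real.log t / κ ≤ ω) → κ' * Real.log s ≤ ω := by
  set M := max 1 (Real.log ((2 * N₀) ^ 2))
  have hM : 0 < M := lt_max_of_lt_left one_pos
  refine ⟨min (1 / (2 * κ)) (c₀ / M), by positivity, fun s t ω hs ht hc hfree => ?_⟩
  rcases le_or_gt (Real.log s) 0 with hlog | hlog
  · exact (mul_nonpos_of_nonneg_of_nonpos (by positivity) hlog).trans (hc₀.le.trans hc)
  have hs₁ : 1 < s := (Real.log_pos_iff hs).1 hlog
  rcases le_or_gt s ((2 * N₀) ^ 2) with hsmall | hlarge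
  · have hlogM : Real.log s ≤ M :=
      (Real.log_le_log (by linarith) hsmall).trans (le_max_right _ _)
    calc min (1 / (2 * κ)) (c₀ / M) * Real.log s ≤ c₀ / M * M := by
          gcongr
          exact min_le_right _ _
      _ = c₀ := by field_simp
      _ ≤ ω := hc
  · have ht₀ : 0 < t := (div_pos (by linarith) (by positivity)).trans_le ht
    calc min (1 / (2 * κ)) (c₀ / M) * Real.log s ≤ 1 / (2 * κ) * (2 * Real.log t) := by
          gcongr
          · exact min_le_left _ _
          · exact log_le_two_mul_log_of_sq_lt (by positivity) hlarge ht
      _ = Real.log t / κ := by field_simp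
      _ ≤ ω := hfree ht₀

theorem stmt19 {H : Type*} [Group H]
    (κ : ℕ) (hκ : 0 < κ) (N₀ : ℝ) (hN₀ : 0 < N₀) (c₀ : ℝ) (hc₀ : 0 < c₀)
    -- the growth rate function `S ↦ ω(H,S)`:
    (ω : Set H → ℝ)
    (hω : ∀ S : Set H, S.Finite → (∀ s ∈ S, s⁻¹ ∈ S) → Subgroup.closure S = ⊤ →
      Tendsto (fun n : ℕ => Real.log (Nat.card (wordBall S n)) / n) atTop (𝓝 (ω S)))
    -- every generating set contains, in its `κ`-ball, a free subset of size `≥ #S/(2N₀)`: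
    (hfree : ∀ S : Set H, S.Finite → (∀ s ∈ S, s⁻¹ ∈ S) → Subgroup.closure S = ⊤ →
      ∃ T : Set H, T ⊆ wordBall S κ ∧ T.Finite ∧
        (T.ncard : ℝ) ≥ (S.ncard : ℝ) / (2 * N₀) ∧
        Function.Injective ⇑(FreeGroup.lift (Subtype.val : T → H)))
    -- a uniform positive lower bound on the growth rate:
    (hc : ∀ S : Set H, S.Finite → (∀ s ∈ S, s⁻¹ ∈ S) → Subgroup.closure S = ⊤ →
      c₀ ≤ ω S) :
    ∃ κ' > (0 : ℝ), ∀ S : Set H, S.Finite → (∀ s ∈ S, s⁻¹ ∈ S) →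
      Subgroup.closure S = ⊤ → ω S ≥ κ' * Real.log S.ncard := by
  obtain ⟨κ', hκ', hbound⟩ := exists_pos_mul_log_le hN₀ hc₀ (Nat.cast_pos.2 hκ)
  refine ⟨κ', hκ', fun S hS hsymm hgen => ?_⟩
  obtain ⟨T, hTS, -, hTcard, hTfree⟩ := hfree S hS hsymm hgen
  exact hbound _ _ _ (Nat.cast_nonneg _) hTcard (hc S hS hsymm hgen) fun hT₀ =>
    log_ncard_div_le_of_tendsto hS (hω S hS hsymm hgen) hκ hTS (by exact_mod_cast hT₀) hTfree
end
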